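/- In a finite bipolar argumentation framework (A, R, Rs) with the weak-support semantics, a set S ⊆ A is a standard complete set if and only if there exists a standard complete labelling λ : A → {+,-,?} such that S = {a ∈ A | λ(a) = +}. -/

import Mathlib

inductive Lab : Type
  | plus | minus | quest
deriving DecidableEq

section
variable {A : Type*} (R Rs : A → A → Prop)

def ConflictFree (S : Set A) : Prop := ∀ a ∈ S, ∀ b ∈ S, ¬ R a b

/-- S defends a iff every attacker of a is attacked by S and not supported by S. -/
def DefendsB (S : Set A) (a : A) : Prop :=
  ∀ b, R b a → (∃ c ∈ S, R c b) ∧ ¬ ∃ c ∈ S, Rs c b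

/-- S is a standard complete set iff it is conflict-free and contains
exactly the arguments it defends. -/
def StdCompleteSet (S : Set A) : Prop :=
  ConflictFree R S ∧ ∀ a, a ∈ S ↔ DefendsB R Rs S a

def StdCompleteLab (lab : A → Lab) : Prop :=
  ∀ a, (lab a = Lab.plus ↔ ∀ b, R b a → lab b = Lab.minus) ∧
       (lab a = Lab.minus ↔
         ((∃ b, R b a ∧ lab b = Lab.plus) ∧ ¬ ∃ c, Rs c a ∧ lab c = Lab.plus))

end

/-! In a standard complete labelling the arguments labelled `-` are exactly those that the
set of `+` arguments attacks without supporting, so the labelling condition for `+` is the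
defence condition for that set. Conversely a complete set `S` yields the labelling `+` on `S`,
`-` on what `S` attacks without supporting, `?` elsewhere; conflict-freeness keeps the first
two classes disjoint. -/

def Rejects {A : Type*} (R Rs : A → A → Prop) (S : Set A) (a : A) : Prop :=
  (∃ b ∈ S, R b a) ∧ ¬ ∃ c ∈ S, Rs c a

section
variable {A : Type*} {R Rs : A → A → Prop}

theorem rejects_setOf_eq_plus_iff {lab : A → Lab} {a : A} :
    Rejects R Rs {b | lab b = Lab.plus} a ↔
      (∃ b, R b a ∧ lab b = Lab.plus) ∧ ¬ ∃ c, Rs c a ∧ lab c = Lab.plus := by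
  simp only [Rejects, Set.mem_ofPred_eq, and_comm]

theorem StdCompleteLab.eq_minus_iff_rejects {lab : A → Lab} (h : StdCompleteLab R Rs lab)
    (a : A) : lab a = Lab.minus ↔ Rejects R Rs {b | lab b = Lab.plus} a :=
  (h a).2.trans rejects_setOf_eq_plus_iff.symm

theorem StdCompleteLab.stdCompleteSet {lab : A → Lab} (h : StdCompleteLab R Rs lab) :
    StdCompleteSet R Rs {a | lab a = Lab.plus} := by
  constructor
  · intro a ha b hb hab
    have hminus : lab a = Lab.minus := (h b).1.1 hb a hab
    rw [ha] at hminus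
    cases hminus
  · intro a
    rw [Set.mem_ofPred_eq, (h a).1]
    exact forall₂_congr fun b _ => h.eq_minus_iff_rejects b

open Classical in
noncomputable def labOfSet (R Rs : A → A → Prop) (S : Set A) (a : A) : Lab :=
  if a ∈ S then Lab.plus else if Rejects R Rs S a then Lab.minus else Lab.quest

theorem labOfSet_eq_plus_iff {S : Set A} {a : A} : labOfSet R Rs S a = Lab.plus ↔ a ∈ S := by
  unfold labOfSet
  split_ifs <;> simp_all

theorem setOf_labOfSet_eq_plus (S : Set A) : {a | labOfSet R Rs S a = Lab.plus} = S :=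
  Set.ext fun _ => labOfSet_eq_plus_iff

theorem labOfSet_eq_minus_iff {S : Set A} (hS : ConflictFree R S) {a : A} :
    labOfSet R Rs S a = Lab.minus ↔ Rejects R Rs S a := by
  unfold labOfSet
  split_ifs with ha hrej
  · simp only [false_iff]
    rintro ⟨⟨b, hb, hba⟩, -⟩
    exact hS b hb a ha hba
  · simpa using hrej
  · simpa using hrej

theorem StdCompleteSet.stdCompleteLab_labOfSet {S : Set A} (h : StdCompleteSet R Rs S) :
    StdCompleteLab R Rs (labOfSet R Rs S) := by
  have hminus (b : A) := labOfSet_eq_minus_iff (Rs := Rs) h.1 (a := b)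
  intro a
  constructor
  · rw [labOfSet_eq_plus_iff, h.2 a]
    exact forall₂_congr fun b _ => (hminus b).symm
  · rw [hminus a, ← rejects_setOf_eq_plus_iff, setOf_labOfSet_eq_plus]

end

theorem std_complete_set_iff_labelling_general {A : Type*}
    (R Rs : A → A → Prop) (S : Set A) :
    StdCompleteSet R Rs S ↔
      ∃ lab : A → Lab, StdCompleteLab R Rs lab ∧ S = {a | lab a = Lab.plus} := by
  constructor
  · intro h
    exact ⟨labOfSet R Rs S, h.stdCompleteLab_labOfSet, (setOf_labOfSet_eq_plus S).symm⟩
  · rintro ⟨lab, hlab, rfl⟩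
    exact hlab.stdCompleteSet

theorem std_complete_set_iff_labelling {A : Type*} [Fintype A]
    (R Rs : A → A → Prop) (S : Set A) :
    StdCompleteSet R Rs S ↔
      ∃ lab : A → Lab, StdCompleteLab R Rs lab ∧ S = {a | lab a = Lab.plus} :=
  std_complete_set_iff_labelling_general R Rs S
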